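/- arXiv:1701.00655 — 3 statements merged into one kernel-verified Lean document; each statement's English description precedes it below -/
import Mathlib

section
/- Let r ≥ 1, p a prime, and let D be a one-dimensional étale (φ^r,Γ)-module over k((t)) (k a finite field of characteristic p), with invariants n(D) ∈ [1, p^r−1] defined by the property that some basis element g satisfies φ^r g = ξ t^{n(D)+1−p^r} g for a scalar ξ ∈ k^×, and with Γ acting on g modulo t·k[[t]]·g through x ↦ x^{s(D)}. Then n(D) ≡ 0 modulo (p−1). -/
/-! Write `φ^r g = a g` with `a = ξ t^z`, `z = n + 1 - p^r`, and `γ(x) g = u g` with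
`u ≡ x^s mod t`. Since `φ^r` and `γ(x)` commute on `g`, `γ(x)(a) u = φ^r(u) a`, and
`γ(x)(t^z) = t^z v^z` where `v = ((1 + t)^x - 1) / t` has constant term `x`.

Any ring endomorphism `ψ` of `R((t))`, `R` a domain, maps `t R[[t]]` into `R[[t]]`: if `ψ(c)` had
a pole, then for the root `y ∈ t R[[t]]` of `y^2 - y = c` given by Hensel's lemma, `ψ(y)` would
have a pole of half that order, and this cannot go on forever. Hence `φ^r(u)` is a power series
with constant term `x^s`, and comparing constant terms gives `x^z = 1`. For `x` a primitive root
mod `p` this means `p - 1 ∣ z`, and since `p - 1 ∣ p^r - 1` also `p - 1 ∣ n`. -/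

open PowerSeries HahnSeries LaurentSeries

namespace PowerSeries

variable {R : Type*} [CommRing R]

theorem exists_mul_self_sub_self_eq_X_mul (c : R⟦X⟧) :
    ∃ y : R⟦X⟧, X * y * (X * y) - X * y = X * c := by
  obtain ⟨a, ha, ha0⟩ := HenselianRing.is_henselian (I := Ideal.span {(X : R⟦X⟧)})
    (Polynomial.X * Polynomial.X - Polynomial.X - Polynomial.C (X * c)) (by monicity!) 0
    (by simp [Ideal.mem_span_singleton]) (by simp [Polynomial.derivative_mul])
  obtain ⟨y, rfl⟩ := Ideal.mem_span_singleton.mp (by simpa using ha0)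
  exact ⟨y, by simpa [sub_eq_zero] using ha⟩

theorem one_add_X_pow_sub_one (x : ℕ) :
    (1 + X : R⟦X⟧) ^ x - 1 = X * mk fun i ↦ (x.choose (i + 1) : R) := by
  have h : (1 + X : R⟦X⟧) ^ x = ((1 + Polynomial.X) ^ x : Polynomial R) := by
    rw [Polynomial.coe_pow, Polynomial.coe_add, Polynomial.coe_one, Polynomial.coe_X]
  ext (_ | j)
  · rw [h]; simp
  · rw [h, map_sub, coeff_succ_X_mul, coeff_mk, Polynomial.coeff_coe,
      Polynomial.coeff_one_add_X_pow]
    simp [coeff_one]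

end PowerSeries

namespace LaurentSeries

variable {R : Type*} [CommRing R]

theorem exists_ofPowerSeries_eq_of_order_nonneg {W : R⸨X⸩} (h : 0 ≤ W.order) :
    ∃ d : R⟦X⟧, W = ofPowerSeries ℤ R d := by
  lift W.order to ℕ using h with m hm
  refine ⟨X ^ m * W.powerSeriesPart, ?_⟩
  rw [map_mul, ofPowerSeries_X_pow, hm, single_order_mul_powerSeriesPart]

variable [IsDomain R]

theorem order_mul_self_sub_self_of_neg {Y : R⸨X⸩} (h : (Y * Y - Y).order < 0) :
    (Y * Y - Y).order = 2 * Y.order := by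
  have hne : Y * Y - Y ≠ 0 := by rintro h0; simp [h0] at h
  by_cases hY : Y.orderTop < 0
  · have hY0 : Y ≠ 0 := by rintro rfl; simp at hY
    rw [← order_eq_orderTop_of_ne_zero hY0, WithTop.coe_lt_zero] at hY
    have hlt : (Y * Y).orderTop < Y.orderTop := by
      rw [orderTop_mul, ← order_eq_orderTop_of_ne_zero hY0, ← WithTop.coe_add,
        WithTop.coe_lt_coe]
      linarith
    have h2 := orderTop_sub hlt
    rw [orderTop_mul, ← order_eq_orderTop_of_ne_zero hY0, ← order_eq_orderTop_of_ne_zero hne,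
      ← WithTop.coe_add, WithTop.coe_eq_coe] at h2
    linarith
  · have : 0 ≤ (Y * Y - Y).orderTop := by
      refine (le_min ?_ (not_lt.mp hY)).trans min_orderTop_le_orderTop_sub
      rw [orderTop_mul]
      exact add_nonneg (not_lt.mp hY) (not_lt.mp hY)
    rw [← order_eq_orderTop_of_ne_zero hne, WithTop.coe_nonneg] at this
    exact absurd this h.not_ge

variable (ψ : R⸨X⸩ →+* R⸨X⸩)

theorem order_map_ofPowerSeries_X_mul_nonneg (c : R⟦X⟧) :
    0 ≤ (ψ (ofPowerSeries ℤ R (X * c))).order := by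
  induction hN : (-(ψ (ofPowerSeries ℤ R (X * c))).order).toNat using Nat.strong_induction_on
    generalizing c with
  | _ N ih =>
  by_contra hneg
  obtain ⟨y, hy⟩ := exists_mul_self_sub_self_eq_X_mul c
  set Y := ψ (ofPowerSeries ℤ R (X * y)) with hY
  have hYW : Y * Y - Y = ψ (ofPowerSeries ℤ R (X * c)) := by
    rw [← hy, map_sub, map_mul, map_sub, map_mul]
  have hord := order_mul_self_sub_self_of_neg (hYW ▸ not_le.mp hneg)
  rw [hYW] at hord
  have hYnonneg : 0 ≤ Y.order := ih _ (by rw [← hY]; omega) y rfl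
  omega

theorem exists_map_ofPowerSeries_eq (hψ : ∀ a, ψ (HahnSeries.C a) = HahnSeries.C a)
    (c : R⟦X⟧) : ∃ d : R⟦X⟧, ψ (ofPowerSeries ℤ R c) = ofPowerSeries ℤ R d := by
  obtain ⟨d, hd⟩ := exists_ofPowerSeries_eq_of_order_nonneg
    (order_map_ofPowerSeries_X_mul_nonneg ψ (mk fun n ↦ coeff (n + 1) c))
  refine ⟨d + PowerSeries.C (constantCoeff c), ?_⟩
  conv_lhs => rw [eq_X_mul_shift_add_const c]
  rw [map_add, map_add, hd, map_add, ofPowerSeries_C, hψ]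

theorem exists_map_ofPowerSeries_eq_and_constantCoeff_eq
    (hψ : ∀ a, ψ (HahnSeries.C a) = HahnSeries.C a) {m : ℕ} (hm : m ≠ 0)
    (hψX : ψ (single 1 1) = single 1 1 ^ m) (c : R⟦X⟧) :
    ∃ d : R⟦X⟧, ψ (ofPowerSeries ℤ R c) = ofPowerSeries ℤ R d ∧
      constantCoeff d = constantCoeff c := by
  obtain ⟨d, hd⟩ := exists_map_ofPowerSeries_eq ψ hψ (mk fun n ↦ coeff (n + 1) c)
  refine ⟨X ^ m * d + PowerSeries.C (constantCoeff c), ?_, by simp [hm]⟩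
  conv_lhs => rw [eq_X_mul_shift_add_const c]
  rw [map_add, map_mul, map_add, map_mul, ofPowerSeries_X, hψX, hd, ofPowerSeries_C, hψ,
    map_add, map_mul, map_pow, ofPowerSeries_X, ofPowerSeries_C]

end LaurentSeries

theorem map_units_val_zpow {A G₀ F : Type*} [Monoid A] [GroupWithZero G₀] [FunLike F A G₀]
    [MonoidHomClass F A G₀] (f : F) (w : Aˣ) (z : ℤ) : f ↑(w ^ z) = f ↑w ^ z := by
  have := congrArg Units.val (map_zpow (Units.map (f : A →* G₀)) w z)
  rwa [Units.val_zpow_eq_zpow_val, Units.coe_map, Units.coe_map] at this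

namespace LaurentSeries

variable {k : Type*} [Field k]

theorem zpow_eq_one_of_map_mul_eq {ψ γ : k⸨X⸩ →+* k⸨X⸩}
    (hψ : ∀ a, ψ (HahnSeries.C a) = HahnSeries.C a) {m : ℕ} (hm : m ≠ 0)
    (hψX : ψ (single 1 1) = single 1 1 ^ m) (hγ : ∀ a, γ (HahnSeries.C a) = HahnSeries.C a)
    {x : ℕ} (hx : (x : k) ≠ 0) (hγX : γ (single 1 1) = (1 + single 1 1) ^ x - 1)
    {ξ : k} (hξ : ξ ≠ 0) (z : ℤ) {U : k⟦X⟧} (hU : constantCoeff U ≠ 0)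
    (h : γ (HahnSeries.C ξ * single 1 1 ^ z) * ofPowerSeries ℤ k U =
      ψ (ofPowerSeries ℤ k U) * (HahnSeries.C ξ * single 1 1 ^ z)) :
    (x : k) ^ z = 1 := by
  set V : k⟦X⟧ := mk fun i ↦ (x.choose (i + 1) : k)
  have hV0 : constantCoeff V = x := by simp [V]
  have hV : IsUnit V := isUnit_iff_constantCoeff.mpr (hV0 ▸ hx.isUnit)
  have hγa : γ (HahnSeries.C ξ * single 1 1 ^ z) =
      HahnSeries.C ξ * single 1 1 ^ z * ofPowerSeries ℤ k ↑(hV.unit ^ z) := by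
    rw [map_mul, map_zpow₀, hγ, hγX, ← ofPowerSeries_X, ← map_one (ofPowerSeries ℤ k),
      ← map_add, ← map_pow, ← map_sub, one_add_X_pow_sub_one, map_mul, mul_zpow, mul_assoc,
      map_units_val_zpow, IsUnit.unit_spec]
  obtain ⟨d, hd, hd0⟩ := exists_map_ofPowerSeries_eq_and_constantCoeff_eq ψ hψ hm hψX U
  have hne : HahnSeries.C ξ * single (1 : ℤ) (1 : k) ^ z ≠ 0 :=
    mul_ne_zero (by simpa using hξ) (zpow_ne_zero _ (single_ne_zero one_ne_zero))
  rw [hγa, hd, mul_comm _ (HahnSeries.C ξ * _), mul_assoc] at h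
  have hUd := congrArg constantCoeff
    (ofPowerSeries_injective (by simpa [← map_mul] using mul_left_cancel₀ hne h))
  rw [map_mul, map_units_val_zpow, IsUnit.unit_spec, hV0, hd0] at hUd
  exact mul_right_cancel₀ hU (hUd.trans (one_mul _).symm)

end LaurentSeries

theorem exists_isPrimitiveRoot_natCast (p : ℕ) [Fact p.Prime] (k : Type*) [Field k]
    [CharP k p] : ∃ x : ℕ, 1 ≤ x ∧ x ≤ p - 1 ∧ IsPrimitiveRoot (x : k) (p - 1) := by
  obtain ⟨ζ, hζ⟩ := IsCyclic.exists_generator (α := (ZMod p)ˣ)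
  have hζp : IsPrimitiveRoot (ζ : ZMod p) (p - 1) := by
    rw [IsPrimitiveRoot.coe_units_iff, ← ZMod.card_units p, ← Nat.card_eq_fintype_card,
      ← orderOf_eq_card_of_forall_mem_zpowers hζ]
    exact IsPrimitiveRoot.orderOf ζ
  have hval : (ζ : ZMod p).val ≠ 0 := by simp [ZMod.val_eq_zero]
  refine ⟨(ζ : ZMod p).val, by omega, by have := ZMod.val_lt (ζ : ZMod p); omega, ?_⟩
  simpa using hζp.map_of_injective (ZMod.castHom (dvd_refl p) k).injective

theorem map_mul_eq_map_mul_of_semilinear_comm {K M : Type*} [DivisionRing K] [AddCommGroup M]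
    [Module K M] {φK γK : K →+* K} {φD γD : M →+ M}
    (hφ : ∀ (c : K) (d : M), φD (c • d) = φK c • φD d)
    (hγ : ∀ (c : K) (d : M), γD (c • d) = γK c • γD d)
    {g : M} (hg : g ≠ 0) (hcomm : γD (φD g) = φD (γD g)) {a u : K}
    (ha : φD g = a • g) (hu : γD g = u • g) : γK a * u = φK u * a := by
  rw [ha, hγ, hu, hφ, ha, smul_smul, smul_smul] at hcomm
  exact smul_left_injective K hg hcomm

theorem stmt_2_general (p r n s : ℕ) (hp : p.Prime)
    (k : Type*) [Field k] [CharP k p]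
    (D : Type*) [AddCommGroup D] [Module (LaurentSeries k) D]
    (g : D) (hg : g ≠ 0)
    -- the `r`-fold Frobenius `φ^r` on `k((t))`: `k`-linear, `t ↦ t^{p^r}`
    (φK : LaurentSeries k →+* LaurentSeries k)
    (hφKC : ∀ a : k, φK (HahnSeries.C a) = HahnSeries.C a)
    (hφKt : φK (HahnSeries.single (1 : ℤ) (1 : k)) =
      HahnSeries.single (1 : ℤ) (1 : k) ^ (p ^ r))
    -- the semilinear structure map `φ^r_D` of `D`
    (φD : D →+ D)
    (hφsem : ∀ (c : LaurentSeries k) (d : D), φD (c • d) = φK c • φD d)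
    (ξ : k) (hξ : ξ ≠ 0)
    (hφg : φD g = (HahnSeries.C ξ *
      (HahnSeries.single (1 : ℤ) (1 : k) : LaurentSeries k) ^ ((n : ℤ) + 1 - (p ^ r : ℤ))) • g)
    -- the action of `γ(x)` for `x ∈ 𝔽_p^×` (via its integer representative in `[1,p-1]`)
    (γK : ℕ → LaurentSeries k →+* LaurentSeries k)
    (γD : ℕ → D →+ D)
    (hγKC : ∀ x, 1 ≤ x → x ≤ p - 1 → ∀ a : k, γK x (HahnSeries.C a) = HahnSeries.C a)
    (hγKt : ∀ x, 1 ≤ x → x ≤ p - 1 →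
      γK x (HahnSeries.single (1 : ℤ) (1 : k)) =
        (1 + HahnSeries.single (1 : ℤ) (1 : k) : LaurentSeries k) ^ x - 1)
    (hγsem : ∀ x, 1 ≤ x → x ≤ p - 1 → ∀ (c : LaurentSeries k) (d : D),
      γD x (c • d) = γK x c • γD x d)
    (hcomm : ∀ x, 1 ≤ x → x ≤ p - 1 → ∀ d : D, γD x (φD d) = φD (γD x d))
    -- `γ(x) g ≡ x^s g` modulo `t·k[[t]]·g`
    (hγg : ∀ x, 1 ≤ x → x ≤ p - 1 → ∃ f : PowerSeries k,
      γD x g - (HahnSeries.C ((x : k) ^ s) : LaurentSeries k) • g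
        = ((HahnSeries.ofPowerSeries ℤ k) (PowerSeries.X * f)) • g) :
    (p - 1) ∣ n := by
  have := Fact.mk hp
  obtain ⟨x, hx1, hx2, hζ⟩ := exists_isPrimitiveRoot_natCast p k
  have hx : (x : k) ≠ 0 := hζ.ne_zero (by have := hp.two_le; omega)
  obtain ⟨f, hf⟩ := hγg x hx1 hx2
  have hu : γD x g = ofPowerSeries ℤ k (PowerSeries.C ((x : k) ^ s) + X * f) • g := by
    rw [map_add, ofPowerSeries_C, add_smul, ← hf, add_sub_cancel]
  have hxz : (x : k) ^ ((n : ℤ) + 1 - (p ^ r : ℤ)) = 1 :=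
    zpow_eq_one_of_map_mul_eq hφKC (pow_ne_zero r hp.ne_zero) hφKt (hγKC x hx1 hx2) hx
      (hγKt x hx1 hx2) hξ _ (by simpa using pow_ne_zero s hx)
      (map_mul_eq_map_mul_of_semilinear_comm hφsem (hγsem x hx1 hx2) hg (hcomm x hx1 hx2 g)
        hφg hu)
  have h1 : ((p - 1 : ℕ) : ℤ) ∣ n + 1 - p ^ r := (hζ.zpow_eq_one_iff_dvd _).mp hxz
  have h2 : ((p - 1 : ℕ) : ℤ) ∣ p ^ r - 1 := by
    push_cast [hp.one_le]
    exact sub_one_dvd_pow_sub_one (p : ℤ) r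
  exact Int.natCast_dvd_natCast.mp (by simpa using dvd_add h1 h2)

/-- a one-dimensional étale `(φ^r, Γ)`-module `D` over `k((t))` (with `k` a
finite field of characteristic `p`), with basis `g` satisfying
`φ^r g = ξ t^{n+1-p^r} g` for `ξ ∈ k^×`, `1 ≤ n ≤ p^r - 1`, and with `Γ` acting on `g`
modulo `t·k[[t]]·g` through `x ↦ x^s`, satisfies `n ≡ 0 mod (p-1)`. -/
theorem stmt_2 (p r n s : ℕ) (hp : p.Prime) (hr : 1 ≤ r)
    (k : Type*) [Field k] [Fintype k] [CharP k p]
    (hn1 : 1 ≤ n) (hn2 : n ≤ p ^ r - 1) (hs : s ≤ p - 2)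
    (D : Type*) [AddCommGroup D] [Module (LaurentSeries k) D]
    (g : D) (hg : g ≠ 0) (hgen : ∀ d : D, ∃ c : LaurentSeries k, d = c • g)
    -- the `r`-fold Frobenius `φ^r` on `k((t))`: `k`-linear, `t ↦ t^{p^r}`
    (φK : LaurentSeries k →+* LaurentSeries k)
    (hφKC : ∀ a : k, φK (HahnSeries.C a) = HahnSeries.C a)
    (hφKt : φK (HahnSeries.single (1 : ℤ) (1 : k)) =
      HahnSeries.single (1 : ℤ) (1 : k) ^ (p ^ r))
    -- the semilinear structure map `φ^r_D` of `D`
    (φD : D →+ D)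
    (hφsem : ∀ (c : LaurentSeries k) (d : D), φD (c • d) = φK c • φD d)
    (ξ : k) (hξ : ξ ≠ 0)
    (hφg : φD g = (HahnSeries.C ξ *
      (HahnSeries.single (1 : ℤ) (1 : k) : LaurentSeries k) ^ ((n : ℤ) + 1 - (p ^ r : ℤ))) • g)
    -- the action of `γ(x)` for `x ∈ 𝔽_p^×` (via its integer representative in `[1,p-1]`)
    (γK : ℕ → LaurentSeries k →+* LaurentSeries k)
    (γD : ℕ → D →+ D)
    (hγKC : ∀ x, 1 ≤ x → x ≤ p - 1 → ∀ a : k, γK x (HahnSeries.C a) = HahnSeries.C a)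
    (hγKt : ∀ x, 1 ≤ x → x ≤ p - 1 →
      γK x (HahnSeries.single (1 : ℤ) (1 : k)) =
        (1 + HahnSeries.single (1 : ℤ) (1 : k) : LaurentSeries k) ^ x - 1)
    (hγsem : ∀ x, 1 ≤ x → x ≤ p - 1 → ∀ (c : LaurentSeries k) (d : D),
      γD x (c • d) = γK x c • γD x d)
    (hcomm : ∀ x, 1 ≤ x → x ≤ p - 1 → ∀ d : D, γD x (φD d) = φD (γD x d))
    -- `γ(x) g ≡ x^s g` modulo `t·k[[t]]·g`
    (hγg : ∀ x, 1 ≤ x → x ≤ p - 1 → ∃ f : PowerSeries k,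
      γD x g - (HahnSeries.C ((x : k) ^ s) : LaurentSeries k) • g
        = ((HahnSeries.ofPowerSeries ℤ k) (PowerSeries.X * f)) • g) :
    (p - 1) ∣ n :=
  stmt_2_general p r n s hp k D g hg φK hφKC hφKt φD hφsem ξ hξ hφg γK γD hγKC hγKt hγsem hcomm hγg
end

section
/- Let r be even. On the set 𝔖̃_D(r) of triples (n,s,ξ) with n = Σ_{i=0}^{r-1} k_i p^i, 1 ≤ n ≤ p^r−2, n ≡ 0 mod (p−1), k_i = k_{i+r/2} for all 1 ≤ i ≤ r/2 − 2, 0 ≤ s ≤ p−2, ξ ∈ k^×, define ι_0 by swapping the digit quadruple (k_0, k_{r/2-1}, k_{r/2}, k_{r-1}) to (k_{r/2}, k_{r-1}, k_0, k_{r/2-1}) and replacing s by s + Σ_{i=0}^{r/2-1} k_i. Then ι_0 is a well-defined involution of 𝔖̃_D(r): ι_0² = id. -/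
/-!
For `r = 2m`, `ι₀` reads the base-`p` digits of `n` through the involution `0 ↔ m`,
`m - 1 ↔ 2m - 1` of the positions `[0, 2m)`. Permuting digits by an involution is an involution
of `[0, p^r)`; it fixes `0` and `p^r - 1` (all digits equal), so it preserves `[1, p^r - 2]`, and
it preserves the digit sum, hence the residue modulo `p - 1` because `p ≡ 1`. The middle digits
do not move, so periodicity persists. Under periodicity the lower half of the digits of `ι₀ n`
is the upper half of those of `n`, so the two shifts of `s` add up to the digit sum of `n`,
which is `≡ n ≡ 0 [MOD p - 1]`.
-/

def pDigit (p a i : ℕ) : ℕ := a / p ^ i % p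

/-- the `n`-component of `ι₀` on `𝔖̃_D(r)`: the digit quadruple
`(k_0, k_{r/2-1}, k_{r/2}, k_{r-1})` is replaced by `(k_{r/2}, k_{r-1}, k_0, k_{r/2-1})`,
all other digits are kept. -/
def iota0N (p r a : ℕ) : ℕ :=
  pDigit p a (r / 2) + (∑ i ∈ Finset.Ico 1 (r / 2 - 1), pDigit p a i * p ^ i)
    + pDigit p a (r - 1) * p ^ (r / 2 - 1) + pDigit p a 0 * p ^ (r / 2)
    + (∑ i ∈ Finset.Ico (r / 2 + 1) (r - 1), pDigit p a i * p ^ i)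
    + pDigit p a (r / 2 - 1) * p ^ (r - 1)

/-- the `s`-component of `ι₀`: `s ↦ s + Σ_{i=0}^{r/2-1} k_i`, taken modulo `p-1`. -/
def iota0S (p r a t : ℕ) : ℕ := (t + ∑ i ∈ Finset.range (r / 2), pDigit p a i) % (p - 1)

open Finset

section Digits

variable {p N : ℕ}

lemma pDigit_lt (hp : 0 < p) (a i : ℕ) : pDigit p a i < p :=
  Nat.mod_lt _ hp

@[simp]
lemma pDigit_zero (p i : ℕ) : pDigit p 0 i = 0 := by
  simp [pDigit]

lemma sum_range_pDigit_mul_pow (p a N : ℕ) :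
    ∑ i ∈ range N, pDigit p a i * p ^ i = a % p ^ N := by
  induction N with
  | zero => simp [Nat.mod_one]
  | succ N ih =>
    rw [sum_range_succ, ih, Nat.mod_pow_succ, pDigit]
    ring

lemma sum_range_mul_pow_lt {c : ℕ → ℕ} (hc : ∀ i < N, c i < p) :
    ∑ i ∈ range N, c i * p ^ i < p ^ N := by
  induction N with
  | zero => simp
  | succ N ih =>
    rw [sum_range_succ, pow_succ]
    have hS := ih fun i hi => hc i (by omega)
    have hcN : (c N + 1) * p ^ N ≤ p * p ^ N := Nat.mul_le_mul_right _ (hc N (by omega))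
    linarith

lemma pDigit_sum_range_mul_pow {c : ℕ → ℕ} (hc : ∀ i < N, c i < p) {j : ℕ} (hj : j < N) :
    pDigit p (∑ i ∈ range N, c i * p ^ i) j = c j := by
  induction N with
  | zero => omega
  | succ N ih =>
    have hp : 0 < p := by have := hc 0 (by omega); omega
    have hS := sum_range_mul_pow_lt fun i (hi : i < N) => hc i (by omega)
    rw [sum_range_succ, pDigit]
    rcases Nat.lt_succ_iff_lt_or_eq.mp hj with hj | rfl
    · -- the top digit contributes a multiple of `p ^ (j + 1)`
      have hsplit : c N * p ^ N = p ^ j * (p * (c N * p ^ (N - j - 1))) := by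
        rw [← mul_assoc, mul_left_comm, ← pow_succ, ← pow_add,
          show j + 1 + (N - j - 1) = N by omega]
      rw [hsplit, Nat.add_mul_div_left _ _ (by positivity), Nat.add_mul_mod_self_left]
      exact ih (fun i hi => hc i (by omega)) hj
    · rw [mul_comm, Nat.add_mul_div_left _ _ (by positivity), Nat.div_eq_of_lt hS, zero_add,
        Nat.mod_eq_of_lt (hc j hj)]

lemma sum_range_sub_one_mul_pow (hp : 0 < p) (N : ℕ) :
    ∑ i ∈ range N, (p - 1) * p ^ i = p ^ N - 1 := by
  have := geom_sum_mul_add (p - 1) N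
  rw [Nat.sub_add_cancel (Nat.one_le_iff_ne_zero.mpr hp.ne')] at this
  rw [← mul_sum, mul_comm]
  omega

lemma pDigit_pow_sub_one (hp : 0 < p) {j : ℕ} (hj : j < N) : pDigit p (p ^ N - 1) j = p - 1 := by
  rw [← sum_range_sub_one_mul_pow hp]
  exact pDigit_sum_range_mul_pow (fun _ _ => by omega) hj

lemma sum_range_mul_pow_modEq_sum (hp : 0 < p) (N : ℕ) (c : ℕ → ℕ) :
    ∑ i ∈ range N, c i * p ^ i ≡ ∑ i ∈ range N, c i [MOD p - 1] := by
  have hp1 : p ≡ 1 [MOD p - 1] := Nat.modEq_sub hp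
  refine Nat.ModEq.sum fun i _ => ?_
  simpa using (hp1.pow i).mul_left (c i)

lemma modEq_sum_range_pDigit (hp : 0 < p) {a : ℕ} (ha : a < p ^ N) :
    a ≡ ∑ i ∈ range N, pDigit p a i [MOD p - 1] := by
  conv_lhs => rw [← Nat.mod_eq_of_lt ha, ← sum_range_pDigit_mul_pow]
  exact sum_range_mul_pow_modEq_sum hp N _

end Digits

section PermuteDigits

variable {p N : ℕ}

def permuteDigits (p N : ℕ) (σ : ℕ → ℕ) (a : ℕ) : ℕ :=
  ∑ j ∈ range N, pDigit p a (σ j) * p ^ j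

lemma permuteDigits_lt (hp : 0 < p) (σ : ℕ → ℕ) (a : ℕ) : permuteDigits p N σ a < p ^ N :=
  sum_range_mul_pow_lt fun _ _ => pDigit_lt hp _ _

lemma pDigit_permuteDigits (hp : 0 < p) (σ : ℕ → ℕ) (a : ℕ) {j : ℕ} (hj : j < N) :
    pDigit p (permuteDigits p N σ a) j = pDigit p a (σ j) :=
  pDigit_sum_range_mul_pow (fun _ _ => pDigit_lt hp _ _) hj

@[simp]
lemma permuteDigits_zero (σ : ℕ → ℕ) : permuteDigits p N σ 0 = 0 := by
  simp [permuteDigits]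

lemma permuteDigits_pow_sub_one (hp : 0 < p) {σ : ℕ → ℕ} (hσ : ∀ j < N, σ j < N) :
    permuteDigits p N σ (p ^ N - 1) = p ^ N - 1 := by
  rw [permuteDigits]
  conv_rhs => rw [← sum_range_sub_one_mul_pow hp N]
  refine sum_congr rfl fun j hj => ?_
  rw [pDigit_pow_sub_one hp (hσ j (mem_range.mp hj)), mul_comm]

lemma permuteDigits_permuteDigits_of_involutive (hp : 0 < p) {σ : ℕ → ℕ}
    (hσ : ∀ j < N, σ j < N) (hσσ : ∀ j < N, σ (σ j) = j) {a : ℕ} (ha : a < p ^ N) :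
    permuteDigits p N σ (permuteDigits p N σ a) = a := by
  conv_rhs => rw [← Nat.mod_eq_of_lt ha, ← sum_range_pDigit_mul_pow]
  refine sum_congr rfl fun j hj => ?_
  have hj := mem_range.mp hj
  rw [pDigit_permuteDigits hp σ a (hσ j hj), hσσ j hj]

lemma permuteDigits_mem_Icc_of_involutive (hp : 0 < p) {σ : ℕ → ℕ}
    (hσ : ∀ j < N, σ j < N) (hσσ : ∀ j < N, σ (σ j) = j) {a : ℕ} (ha : a ∈ Icc 1 (p ^ N - 2)) :
    permuteDigits p N σ a ∈ Icc 1 (p ^ N - 2) := by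
  have ha' : a < p ^ N := by simp only [mem_Icc] at ha; omega
  have hinv := permuteDigits_permuteDigits_of_involutive hp hσ hσσ ha'
  have hne_zero : permuteDigits p N σ a ≠ 0 := by
    intro h
    rw [h, permuteDigits_zero] at hinv
    simp only [mem_Icc] at ha; omega
  have hne_top : permuteDigits p N σ a ≠ p ^ N - 1 := by
    intro h
    rw [h, permuteDigits_pow_sub_one hp hσ] at hinv
    simp only [mem_Icc] at ha; omega
  have := permuteDigits_lt hp σ a (N := N)
  simp only [mem_Icc]; omega

lemma permuteDigits_modEq_of_involutive (hp : 0 < p) {σ : ℕ → ℕ}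
    (hσ : ∀ j < N, σ j < N) (hσσ : ∀ j < N, σ (σ j) = j) {a : ℕ} (ha : a < p ^ N) :
    permuteDigits p N σ a ≡ a [MOD p - 1] := by
  have hsum : ∑ j ∈ range N, pDigit p a (σ j) = ∑ j ∈ range N, pDigit p a j :=
    sum_nbij' σ σ (fun j hj => by simpa using hσ j (by simpa using hj))
      (fun j hj => by simpa using hσ j (by simpa using hj))
      (fun j hj => hσσ j (by simpa using hj)) (fun j hj => hσσ j (by simpa using hj))
      fun _ _ => rfl
  calc permuteDigits p N σ a ≡ ∑ j ∈ range N, pDigit p a (σ j) [MOD p - 1] :=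
        sum_range_mul_pow_modEq_sum hp N _
    _ = ∑ j ∈ range N, pDigit p a j := hsum
    _ ≡ a [MOD p - 1] := (modEq_sum_range_pDigit hp ha).symm

end PermuteDigits

lemma sum_Ico_succ_eq_add_add {M : Type*} [AddCommMonoid M] {a b : ℕ} (hab : a < b)
    (f : ℕ → M) : ∑ i ∈ Ico a (b + 1), f i = f a + ∑ i ∈ Ico (a + 1) b, f i + f b := by
  rw [sum_Ico_succ_top hab.le, sum_eq_sum_Ico_succ_bot hab]

lemma sum_range_two_mul_eq_add {M : Type*} [AddCommMonoid M] {m : ℕ} (hm : 2 ≤ m)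
    (f : ℕ → M) :
    ∑ i ∈ range (2 * m), f i = f 0 + ∑ i ∈ Ico 1 (m - 1), f i + f (m - 1)
      + (f m + ∑ i ∈ Ico (m + 1) (2 * m - 1), f i + f (2 * m - 1)) := by
  have hsplit : ∑ i ∈ range (2 * m), f i
      = ∑ i ∈ Ico 0 (m - 1 + 1), f i + ∑ i ∈ Ico m (2 * m - 1 + 1), f i := by
    rw [Nat.sub_add_cancel (by omega : 1 ≤ m), Nat.sub_add_cancel (by omega : 1 ≤ 2 * m),
      sum_Ico_consecutive _ (Nat.zero_le m) (by omega), range_eq_Ico]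
  rw [hsplit, sum_Ico_succ_eq_add_add (by omega), sum_Ico_succ_eq_add_add (by omega)]

section Iota0

variable {m : ℕ}

def iota0Index (m i : ℕ) : ℕ :=
  if i = 0 then m else if i = m then 0 else if i = m - 1 then 2 * m - 1
  else if i = 2 * m - 1 then m - 1 else i

lemma iota0Index_eq_self {i : ℕ} (h0 : i ≠ 0) (h1 : i ≠ m - 1) (h2 : i ≠ m)
    (h3 : i ≠ 2 * m - 1) : iota0Index m i = i := by
  simp [iota0Index, *]

lemma iota0Index_lt (hm : 2 ≤ m) {i : ℕ} (hi : i < 2 * m) : iota0Index m i < 2 * m := by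
  unfold iota0Index; split_ifs <;> omega

lemma iota0Index_iota0Index (hm : 2 ≤ m) (i : ℕ) : iota0Index m (iota0Index m i) = i := by
  unfold iota0Index; split_ifs <;> omega

lemma iota0N_eq_permuteDigits (hm : 2 ≤ m) (p a : ℕ) :
    iota0N p (2 * m) a = permuteDigits p (2 * m) (iota0Index m) a := by
  have hmid : ∀ i ∈ Ico 1 (m - 1) ∪ Ico (m + 1) (2 * m - 1), iota0Index m i = i := by
    intro i hi
    simp only [mem_union, mem_Ico] at hi
    exact iota0Index_eq_self (by omega) (by omega) (by omega) (by omega)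
  have hlow : ∑ i ∈ Ico 1 (m - 1), pDigit p a (iota0Index m i) * p ^ i
      = ∑ i ∈ Ico 1 (m - 1), pDigit p a i * p ^ i :=
    sum_congr rfl fun i hi => by rw [hmid i (mem_union_left _ hi)]
  have hhigh : ∑ i ∈ Ico (m + 1) (2 * m - 1), pDigit p a (iota0Index m i) * p ^ i
      = ∑ i ∈ Ico (m + 1) (2 * m - 1), pDigit p a i * p ^ i :=
    sum_congr rfl fun i hi => by rw [hmid i (mem_union_right _ hi)]
  have hswap : iota0Index m 0 = m ∧ iota0Index m (m - 1) = 2 * m - 1 ∧ iota0Index m m = 0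
      ∧ iota0Index m (2 * m - 1) = m - 1 := by
    unfold iota0Index
    refine ⟨?_, ?_, ?_, ?_⟩ <;> split_ifs <;> omega
  rw [iota0N, permuteDigits, sum_range_two_mul_eq_add hm, Nat.mul_div_cancel_left m two_pos,
    hlow, hhigh, hswap.1, hswap.2.1, hswap.2.2.1, hswap.2.2.2]
  ring

variable {p : ℕ}

lemma pDigit_iota0Index_of_periodic (hm : 2 ≤ m) {a : ℕ}
    (hper : ∀ i, 1 ≤ i → i ≤ m - 2 → pDigit p a i = pDigit p a (i + m)) {i : ℕ} (hi : i < m) :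
    pDigit p a (iota0Index m i) = pDigit p a (m + i) := by
  by_cases h0 : i = 0
  · simp [h0, iota0Index]
  by_cases h1 : i = m - 1
  · simp only [h1, iota0Index, if_neg (show m - 1 ≠ 0 by omega), if_neg (show m - 1 ≠ m by omega),
      if_true]
    congr 1; omega
  rw [iota0Index_eq_self h0 h1 (by omega) (by omega), hper i (by omega) (by omega), add_comm]

lemma sum_range_pDigit_add_sum_range_pDigit_iota0N (hp : 0 < p) (hm : 2 ≤ m) {a : ℕ}
    (hper : ∀ i, 1 ≤ i → i ≤ m - 2 → pDigit p a i = pDigit p a (i + m)) :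
    ∑ i ∈ range m, pDigit p a i + ∑ i ∈ range m, pDigit p (iota0N p (2 * m) a) i
      = ∑ i ∈ range (2 * m), pDigit p a i := by
  rw [iota0N_eq_permuteDigits hm, two_mul, sum_range_add]
  congr 1
  refine sum_congr rfl fun i hi => ?_
  have hi := mem_range.mp hi
  rw [pDigit_permuteDigits hp _ _ (by omega), pDigit_iota0Index_of_periodic hm hper hi]

lemma iota0S_iota0N_iota0S (hp : 0 < p) (hm : 2 ≤ m) {a s : ℕ} (ha : a < p ^ (2 * m))
    (hdvd : p - 1 ∣ a) (hper : ∀ i, 1 ≤ i → i ≤ m - 2 → pDigit p a i = pDigit p a (i + m))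
    (hs : s < p - 1) :
    iota0S p (2 * m) (iota0N p (2 * m) a) (iota0S p (2 * m) a s) = s := by
  have hdigits : p - 1 ∣ ∑ i ∈ range m, pDigit p a i
      + ∑ i ∈ range m, pDigit p (iota0N p (2 * m) a) i := by
    rw [sum_range_pDigit_add_sum_range_pDigit_iota0N hp hm hper, ← Nat.modEq_zero_iff_dvd]
    exact (modEq_sum_range_pDigit hp ha).symm.trans (Nat.modEq_zero_iff_dvd.mpr hdvd)
  obtain ⟨t, ht⟩ := hdigits
  rw [iota0S, iota0S, Nat.mul_div_cancel_left m two_pos, Nat.mod_add_mod, add_assoc, ht,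
    Nat.add_mul_mod_self_left, Nat.mod_eq_of_lt hs]

end Iota0

theorem stmt_5_general (p r : ℕ) (hp : p.Prime) (hr4 : 4 ≤ r) (hre : Even r)
    (n s : ℕ)
    (hn1 : 1 ≤ n) (hn2 : n ≤ p ^ r - 2) (hdvd : (p - 1) ∣ n)
    (hper : ∀ i, 1 ≤ i → i ≤ r / 2 - 2 → pDigit p n i = pDigit p n (i + r / 2))
    (hs : s ≤ p - 2) :
    (1 ≤ iota0N p r n ∧ iota0N p r n ≤ p ^ r - 2 ∧ (p - 1) ∣ iota0N p r n
      ∧ (∀ i, 1 ≤ i → i ≤ r / 2 - 2 →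
          pDigit p (iota0N p r n) i = pDigit p (iota0N p r n) (i + r / 2)))
    ∧ iota0N p r (iota0N p r n) = n
    ∧ iota0S p r (iota0N p r n) (iota0S p r n s) = s := by
  obtain ⟨m, rfl⟩ := hre.two_dvd
  have hm : 2 ≤ m := by omega
  have hp2 : 2 ≤ p := hp.two_le
  have hp0 : 0 < p := by omega
  have hn : n < p ^ (2 * m) := by omega
  have hσ : ∀ j < 2 * m, iota0Index m j < 2 * m := fun j => iota0Index_lt hm
  have hσσ : ∀ j < 2 * m, iota0Index m (iota0Index m j) = j :=
    fun j _ => iota0Index_iota0Index hm j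
  rw [Nat.mul_div_cancel_left m two_pos] at hper ⊢
  refine ⟨?_, ?_, iota0S_iota0N_iota0S hp0 hm hn hdvd hper (by omega)⟩
  · rw [iota0N_eq_permuteDigits hm]
    have hIcc := permuteDigits_mem_Icc_of_involutive hp0 hσ hσσ (mem_Icc.mpr ⟨hn1, hn2⟩)
    refine ⟨(mem_Icc.mp hIcc).1, (mem_Icc.mp hIcc).2, ?_, fun i hi1 hi2 => ?_⟩
    · exact Nat.modEq_zero_iff_dvd.mp
        ((permuteDigits_modEq_of_involutive hp0 hσ hσσ hn).trans (Nat.modEq_zero_iff_dvd.mpr hdvd))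
    · rw [pDigit_permuteDigits hp0 _ _ (by omega), pDigit_permuteDigits hp0 _ _ (by omega),
        iota0Index_eq_self (by omega) (by omega) (by omega) (by omega),
        iota0Index_eq_self (by omega) (by omega) (by omega) (by omega)]
      exact hper i hi1 hi2
  · rw [iota0N_eq_permuteDigits hm, iota0N_eq_permuteDigits hm]
    exact permuteDigits_permuteDigits_of_involutive hp0 hσ hσσ hn

/-- for `r` even, `ι₀` is a well-defined involution of `𝔖̃_D(r)`
(the set of `(n,s,ξ)` with `1 ≤ n ≤ p^r-2`, `n ≡ 0 mod (p-1)`,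
`k_i = k_{i+r/2}` for `1 ≤ i ≤ r/2-2`, `0 ≤ s ≤ p-2`, `ξ ∈ k^×`): `ι₀² = id`. -/
theorem stmt_5 (p r : ℕ) (hp : p.Prime) (hr4 : 4 ≤ r) (hre : Even r)
    (k : Type*) [Field k] (n s : ℕ) (ξ : kˣ)
    (hn1 : 1 ≤ n) (hn2 : n ≤ p ^ r - 2) (hdvd : (p - 1) ∣ n)
    (hper : ∀ i, 1 ≤ i → i ≤ r / 2 - 2 → pDigit p n i = pDigit p n (i + r / 2))
    (hs : s ≤ p - 2) :
    (1 ≤ iota0N p r n ∧ iota0N p r n ≤ p ^ r - 2 ∧ (p - 1) ∣ iota0N p r n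
      ∧ (∀ i, 1 ≤ i → i ≤ r / 2 - 2 →
          pDigit p (iota0N p r n) i = pDigit p (iota0N p r n) (i + r / 2)))
    ∧ iota0N p r (iota0N p r n) = n
    ∧ iota0S p r (iota0N p r n) (iota0S p r n s) = s :=
  stmt_5_general p r hp hr4 hre n s hn1 hn2 hdvd hper hs
end

section
/- In Sp_{2d}(ℚ_p) (defined with the symplectic form given by the matrix Ŝ_d with blocks (0, E_d; −E_d, 0)), let ṡ_i for 1 ≤ i ≤ d−1 be the block diagonal matrix diag(E_{i-1}, Ŝ_1, E_{d-i-1}, E_{i-1}, Ŝ_1, E_{d-i-1}), let ṡ_d be the matrix exchanging basis vectors e_d and e_{2d} with a sign (entry 1 at (d,2d), entry −1 at (2d,d), identity elsewhere), and let ṡ_0 be the matrix with entry −p^{-1} at (1,d+1), entry p at (d+1,1), identity elsewhere. Set φ = (p·id)·ṡ_d ṡ_{d-1} ⋯ ṡ_1 ṡ_0 in GSp_{2d}(ℚ_p). Then φ^d = (−1)^{d-1} diag(p^{d+1} E_d, p^{d-1} E_d). -/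
/-! Every factor of `φ` is a monomial matrix (one nonzero entry per column), hence so is `φ`.
The index map of `ṡ_{d-1} ⋯ ṡ_1` shifts each half `{0, …, d-1}`, `{d, …, 2d-1}` of the index set
cyclically down by one; the transpositions `0 ↔ d` of `ṡ_0` and `d-1 ↔ 2d-1` of `ṡ_d` are
conjugate under this shift and cancel, leaving only their weights. So `p⁻¹ φ` is the monomial matrix
of a product of two `d`-cycles with weight `(-1)^{d-1} p` at index `0`, `(-1)^{d-1} p⁻¹` at index
`d` and `1` elsewhere, and its `d`-th power is diagonal, each entry being the product of the
weights along one cycle. -/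

noncomputable section
open Matrix

/-- the lift `ṡ_i ∈ Sp_{2d}(ℚ_p)`, `1 ≤ i ≤ d-1` (0-indexed matrix entries):
`diag(E_{i-1}, Ŝ_1, E_{d-i-1}, E_{i-1}, Ŝ_1, E_{d-i-1})` with `Ŝ_1 = ((0,1),(-1,0))`. -/
def sC (p : ℕ) [Fact p.Prime] (d i : ℕ) : Matrix (Fin (2 * d)) (Fin (2 * d)) ℚ_[p] :=
  Matrix.of fun a b =>
    if (a.val = i - 1 ∧ b.val = i) ∨ (a.val = d + i - 1 ∧ b.val = d + i) then 1
    else if (a.val = i ∧ b.val = i - 1) ∨ (a.val = d + i ∧ b.val = d + i - 1) then -1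
    else if a = b ∧ a.val ≠ i - 1 ∧ a.val ≠ i ∧ a.val ≠ d + i - 1 ∧ a.val ≠ d + i then 1
    else 0

/-- the lift `ṡ_d`: entry `1` at `(d, 2d)`, entry `-1` at `(2d, d)` (1-indexed),
identity elsewhere. -/
def sCd (p : ℕ) [Fact p.Prime] (d : ℕ) : Matrix (Fin (2 * d)) (Fin (2 * d)) ℚ_[p] :=
  Matrix.of fun a b =>
    if a.val = d - 1 ∧ b.val = 2 * d - 1 then 1
    else if a.val = 2 * d - 1 ∧ b.val = d - 1 then -1
    else if a = b ∧ a.val ≠ d - 1 ∧ a.val ≠ 2 * d - 1 then 1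
    else 0

/-- the lift `ṡ_0`: entry `-p⁻¹` at `(1, d+1)`, entry `p` at `(d+1, 1)` (1-indexed),
identity elsewhere. -/
def sC0 (p : ℕ) [Fact p.Prime] (d : ℕ) : Matrix (Fin (2 * d)) (Fin (2 * d)) ℚ_[p] :=
  Matrix.of fun a b =>
    if a.val = 0 ∧ b.val = d then -(p : ℚ_[p])⁻¹
    else if a.val = d ∧ b.val = 0 then (p : ℚ_[p])
    else if a = b ∧ a.val ≠ 0 ∧ a.val ≠ d then 1
    else 0

/-- `φ = (p·id)·ṡ_d ṡ_{d-1} ⋯ ṡ_1 ṡ_0 ∈ GSp_{2d}(ℚ_p)`. -/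
def phiC (p : ℕ) [Fact p.Prime] (d : ℕ) : Matrix (Fin (2 * d)) (Fin (2 * d)) ℚ_[p] :=
  (p : ℚ_[p]) •
    (sCd p d * ((List.range (d - 1)).map (fun j => sC p d (d - 1 - j))).prod * sC0 p d)

open Finset

section MonomialMatrix

variable {R : Type*} [CommSemiring R] {m : ℕ}

/-- Index maps and weights live on `ℕ`, so that they can be written by arithmetic on indices;
only their values below `m` matter. -/
def monomialMatrix (m : ℕ) (f : ℕ → ℕ) (c : ℕ → R) : Matrix (Fin m) (Fin m) R :=
  Matrix.of fun a b => if (a : ℕ) = f b then c b else 0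

theorem monomialMatrix_mul {f g : ℕ → ℕ} (c e : ℕ → R)
    (hg : Set.MapsTo g (Set.Iio m) (Set.Iio m)) :
    monomialMatrix m f c * monomialMatrix m g e =
      monomialMatrix m (f ∘ g) (fun x => c (g x) * e x) := by
  ext a b
  rw [mul_apply, Finset.sum_eq_single ⟨g b, hg b.isLt⟩]
  · by_cases h : (a : ℕ) = f (g b) <;> simp [monomialMatrix, h]
  · intro j _ hj
    simp [monomialMatrix, show (j : ℕ) ≠ g b from fun h => hj (Fin.ext h)]
  · simp

theorem monomialMatrix_congr {f f' : ℕ → ℕ} {c c' : ℕ → R} (hf : Set.EqOn f f' (Set.Iio m))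
    (hc : Set.EqOn c c' (Set.Iio m)) : monomialMatrix m f c = monomialMatrix m f' c' := by
  ext a b
  simp [monomialMatrix, hf b.isLt, hc b.isLt]

theorem monomialMatrix_id (c : ℕ → R) :
    monomialMatrix m id c = diagonal fun a : Fin m => c a := by
  ext a b
  simp only [monomialMatrix, of_apply, id, diagonal_apply, ← Fin.ext_iff]
  split_ifs with h
  · rw [h]
  · rfl

theorem monomialMatrix_pow {f : ℕ → ℕ} (c : ℕ → R) (hf : Set.MapsTo f (Set.Iio m) (Set.Iio m))
    (k : ℕ) :
    monomialMatrix m f c ^ k = monomialMatrix m f^[k] fun x => ∏ j ∈ range k, c (f^[j] x) := by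
  induction k with
  | zero => simp [monomialMatrix_id]
  | succ k ih =>
    rw [pow_succ, ih, monomialMatrix_mul _ _ hf, ← Function.iterate_succ]
    simp only [prod_range_succ' _ k, ← Function.iterate_succ_apply, Function.iterate_zero_apply]

end MonomialMatrix

section Phi

variable {p : ℕ} [Fact p.Prime] {d : ℕ}

theorem sC_eq_monomialMatrix {i : ℕ} (hi : 1 ≤ i) (hid : i < d) :
    sC p d i = monomialMatrix (2 * d) (Equiv.swap (i - 1) i ∘ Equiv.swap (d + i - 1) (d + i))
      fun x => if x = i - 1 ∨ x = d + i - 1 then -1 else 1 := by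
  ext a b
  have := a.isLt; have := b.isLt
  simp only [sC, monomialMatrix, of_apply, Function.comp_apply, Equiv.swap_apply_def,
    Fin.ext_iff]
  split_ifs <;> first | rfl | (exfalso; omega)

theorem sCd_eq_monomialMatrix :
    sCd p d = monomialMatrix (2 * d) (Equiv.swap (d - 1) (2 * d - 1))
      fun x => if x = d - 1 then -1 else 1 := by
  ext a b
  have := a.isLt; have := b.isLt
  simp only [sCd, monomialMatrix, of_apply, Equiv.swap_apply_def, Fin.ext_iff]
  split_ifs <;> first | rfl | (exfalso; omega)

theorem sC0_eq_monomialMatrix :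
    sC0 p d = monomialMatrix (2 * d) (Equiv.swap 0 d)
      fun x => if x = d then -(p : ℚ_[p])⁻¹ else if x = 0 then (p : ℚ_[p]) else 1 := by
  ext a b
  have := a.isLt; have := b.isLt
  simp only [sC0, monomialMatrix, of_apply, Equiv.swap_apply_def, Fin.ext_iff]
  split_ifs <;> first | rfl | (exfalso; omega)

def shiftCycle (d k x : ℕ) : ℕ :=
  if x = d - 1 - k then d - 1 else if x = 2 * d - 1 - k then 2 * d - 1
  else if d - 1 - k < x ∧ x < d ∨ 2 * d - 1 - k < x ∧ x < 2 * d then x - 1 else x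

theorem shiftCycle_mapsTo (k : ℕ) :
    Set.MapsTo (shiftCycle d k) (Set.Iio (2 * d)) (Set.Iio (2 * d)) := by
  intro x (hx : x < 2 * d)
  show shiftCycle d k x < 2 * d
  unfold shiftCycle
  split_ifs <;> omega

theorem shiftCycle_comp_swap {i k : ℕ} (hi : 1 ≤ i) (hik : i + k + 1 = d) :
    Set.EqOn (shiftCycle d k ∘ Equiv.swap (i - 1) i ∘ Equiv.swap (d + i - 1) (d + i))
      (shiftCycle d (k + 1)) (Set.Iio (2 * d)) := by
  intro x (hx : x < 2 * d)
  simp only [Function.comp_apply, Equiv.swap_apply_def]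
  split_ifs <;> (unfold shiftCycle; split_ifs <;> omega)

theorem prod_sC_eq_monomialMatrix {k : ℕ} (hk : k ≤ d - 1) :
    ((List.range k).map fun j => sC p d (d - 1 - j)).prod =
      monomialMatrix (2 * d) (shiftCycle d k)
        fun x => if x = d - 1 - k ∨ x = 2 * d - 1 - k then (-1) ^ k else 1 := by
  induction k with
  | zero =>
    ext a b
    have := a.isLt; have := b.isLt
    simp only [List.range_zero, List.map_nil, List.prod_nil, one_apply, monomialMatrix, of_apply,
      shiftCycle, Fin.ext_iff]
    split_ifs <;> first | rfl | (exfalso; omega)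
  | succ k ih =>
    have hmaps : Set.MapsTo
        (Equiv.swap (d - 1 - k - 1) (d - 1 - k) ∘ Equiv.swap (d + (d - 1 - k) - 1) (d + (d - 1 - k)))
        (Set.Iio (2 * d)) (Set.Iio (2 * d)) := by
      intro x (hx : x < 2 * d)
      show _ < 2 * d
      simp only [Function.comp_apply, Equiv.swap_apply_def]
      split_ifs <;> omega
    rw [List.range_succ, List.map_append, List.prod_append, List.map_singleton,
      List.prod_singleton, ih (by omega), sC_eq_monomialMatrix (by omega) (by omega),
      monomialMatrix_mul _ _ hmaps]
    refine monomialMatrix_congr (shiftCycle_comp_swap (by omega) (by omega)) ?_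
    intro x (hx : x < 2 * d)
    simp only [Equiv.swap_apply_def, Function.comp_apply]
    split_ifs <;> first | rfl | (exfalso; omega) | ring

def cycleWeight (p : ℕ) [Fact p.Prime] (d x : ℕ) : ℚ_[p] :=
  if x = 0 then (-1) ^ (d - 1) * p else if x = d then (-1) ^ (d - 1) * (p : ℚ_[p])⁻¹ else 1

theorem sCd_mul_prod_sC_mul_sC0 :
    sCd p d * ((List.range (d - 1)).map fun j => sC p d (d - 1 - j)).prod * sC0 p d =
      monomialMatrix (2 * d) (shiftCycle d (d - 1)) (cycleWeight p d) := by
  have hmaps : Set.MapsTo (Equiv.swap 0 d) (Set.Iio (2 * d)) (Set.Iio (2 * d)) := by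
    intro x (hx : x < 2 * d)
    show _ < 2 * d
    rw [Equiv.swap_apply_def]
    split_ifs <;> omega
  rw [sCd_eq_monomialMatrix, prod_sC_eq_monomialMatrix le_rfl, sC0_eq_monomialMatrix,
    monomialMatrix_mul _ _ (shiftCycle_mapsTo _), monomialMatrix_mul _ _ hmaps]
  refine monomialMatrix_congr ?_ ?_
  · intro x (hx : x < 2 * d)
    simp only [Function.comp_apply, Equiv.swap_apply_def, shiftCycle]
    split_ifs <;> omega
  · intro x (hx : x < 2 * d)
    simp only [Equiv.swap_apply_def, shiftCycle, cycleWeight]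
    split_ifs <;> first | rfl | (exfalso; omega) | ring

theorem iterate_shiftCycle_apply {j x : ℕ} (hj : j ≤ d) (hx : x < 2 * d) :
    (shiftCycle d (d - 1))^[j] x =
      if x < d then (if j ≤ x then x - j else x + d - j)
      else (if j + d ≤ x then x - j else x + d - j) := by
  induction j with
  | zero =>
    rw [Function.iterate_zero_apply]
    split_ifs <;> omega
  | succ j ih =>
    rw [Function.iterate_succ_apply', ih (by omega)]
    unfold shiftCycle
    split_ifs <;> omega

theorem prod_cycleWeight_iterate_shiftCycle {x : ℕ} (hx : x < 2 * d) :
    ∏ j ∈ range d, cycleWeight p d ((shiftCycle d (d - 1))^[j] x) =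
      (-1) ^ (d - 1) * if x < d then (p : ℚ_[p]) else (p : ℚ_[p])⁻¹ := by
  obtain ⟨j₀, hj₀, hxj₀⟩ : ∃ j₀ < d, x = j₀ ∨ x = j₀ + d := by
    by_cases h : x < d
    · exact ⟨x, h, .inl rfl⟩
    · exact ⟨x - d, by omega, .inr (by omega)⟩
  rw [prod_eq_single_of_mem j₀ (mem_range.2 hj₀)]
  · rw [iterate_shiftCycle_apply hj₀.le hx]
    unfold cycleWeight
    split_ifs <;> first | rfl | (exfalso; omega)
  · intro j hj hne
    rw [mem_range] at hj
    rw [iterate_shiftCycle_apply hj.le hx]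
    unfold cycleWeight
    split_ifs <;> first | rfl | (exfalso; omega)

theorem iterate_shiftCycle_eqOn_id :
    Set.EqOn (shiftCycle d (d - 1))^[d] id (Set.Iio (2 * d)) := by
  intro x (hx : x < 2 * d)
  rw [iterate_shiftCycle_apply le_rfl hx, id]
  split_ifs <;> omega

end Phi

theorem stmt_7_general (p d : ℕ) [Fact p.Prime] :
    phiC p d ^ d =
      ((-1 : ℚ_[p]) ^ (d - 1)) •
        Matrix.diagonal (fun a : Fin (2 * d) =>
          if a.val < d then (p : ℚ_[p]) ^ (d + 1) else (p : ℚ_[p]) ^ (d - 1)) := by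
  rw [phiC, smul_pow, sCd_mul_prod_sC_mul_sC0, monomialMatrix_pow _ (shiftCycle_mapsTo _),
    monomialMatrix_congr iterate_shiftCycle_eqOn_id fun x hx =>
      prod_cycleWeight_iterate_shiftCycle hx,
    monomialMatrix_id, ← diagonal_smul, ← diagonal_smul]
  congr 1
  ext a
  have := a.isLt
  have hpd : (p : ℚ_[p]) ^ d = p ^ (d - 1) * p := by
    rw [← pow_succ, Nat.sub_add_cancel (by omega : 1 ≤ d)]
  simp only [Pi.smul_apply, smul_eq_mul]
  split_ifs
  · ring
  · have hp : (p : ℚ_[p]) ≠ 0 := mod_cast (Fact.out : p.Prime).ne_zero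
    rw [hpd]
    field_simp

/-- `φ^d = (-1)^{d-1} diag(p^{d+1} E_d, p^{d-1} E_d)`. -/
theorem stmt_7 (p d : ℕ) [Fact p.Prime] (hd : 2 ≤ d) :
    phiC p d ^ d =
      ((-1 : ℚ_[p]) ^ (d - 1)) •
        Matrix.diagonal (fun a : Fin (2 * d) =>
          if a.val < d then (p : ℚ_[p]) ^ (d + 1) else (p : ℚ_[p]) ^ (d - 1)) :=
  stmt_7_general p d
end
end
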